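/- arXiv:2512.06260 — 6 statements merged into one kernel-verified Lean document; each statement's English description precedes it below -/
import Mathlib

section
/- Monotonicity of the reduction factor under refinement: let {S_k}_{k=1}^G and {S'_l}_{l=1}^{G'} be two partitions of [m] such that every S'_l is contained in some S_k (i.e., {S'_l} refines {S_k}). Then for any density matrix ρ, R[{S_k}; ρ] ≤ R[{S'_l}; ρ], where R[{S_k}; ρ] = Σ_k q_k tr[K_k† K_k ρ] with q_k = Σ_{i∈S_k} p_i and K_k = Σ_{i∈S_k}(p_i/q_k)U_i. -/
/-!
Put `A_T = ∑_{i ∈ T} p_i U_i`. Since `K_k = q_k⁻¹ A_{S_k}` and `ρ = √ρ √ρ`, the `k`-th term of the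
reduction factor is `‖A_{S_k} √ρ‖² / q_k` in the Frobenius norm. Each block `S_k` is the disjoint
union of the blocks `S'_l` it contains, so `A_{S_k} √ρ` and `q_k` are the sums of the corresponding
`A_{S'_l} √ρ` and `q'_l`, and the inequality holds block by block by the Cauchy–Schwarz inequality
in Sedrakyan's form `‖∑ v_l‖² / ∑ w_l ≤ ∑ ‖v_l‖² / w_l`.
-/

open Matrix Function
open scoped ComplexOrder

attribute [local instance] Matrix.frobeniusNormedAddCommGroup

section Frobenius

variable {m n : Type*} [Fintype m] [Fintype n]

theorem Matrix.trace_conjTranspose_mul_self_eq_frobenius_norm_sq (A : Matrix m n ℂ) :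
    (Aᴴ * A).trace = ((‖A‖ ^ 2 : ℝ) : ℂ) := by
  rw [frobenius_norm_def, ← Real.rpow_natCast, ← Real.rpow_mul (by positivity), Nat.cast_ofNat,
    one_div_mul_cancel two_ne_zero, Real.rpow_one, trace, Finset.sum_comm]
  simp [mul_apply, Complex.conj_mul']

open scoped MatrixOrder in
theorem Matrix.PosSemidef.trace_conjTranspose_mul_self_mul_eq [DecidableEq n]
    {ρ : Matrix n n ℂ} (hρ : ρ.PosSemidef) (A : Matrix m n ℂ) :
    (Aᴴ * A * ρ).trace = ((‖A * CFC.sqrt ρ‖ ^ 2 : ℝ) : ℂ) := by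
  set s := CFC.sqrt ρ
  have hs : sᴴ = s := (CFC.sqrt_nonneg ρ).posSemidef.1
  have hρs : Aᴴ * A * ρ = Aᴴ * A * s * s := by
    rw [Matrix.mul_assoc _ s, CFC.sqrt_mul_sqrt_self ρ hρ.nonneg]
  rw [hρs, trace_mul_comm, ← trace_conjTranspose_mul_self_eq_frobenius_norm_sq,
    conjTranspose_mul, hs]
  simp only [Matrix.mul_assoc]

open scoped MatrixOrder in
theorem Matrix.PosSemidef.ofReal_mul_trace_inv_smul_eq [DecidableEq n]
    {ρ : Matrix n n ℂ} (hρ : ρ.PosSemidef) (A : Matrix m n ℂ) (c : ℝ) :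
    (c : ℂ) * ((((c⁻¹ : ℝ) : ℂ) • A)ᴴ * (((c⁻¹ : ℝ) : ℂ) • A) * ρ).trace
      = ((‖A * CFC.sqrt ρ‖ ^ 2 / c : ℝ) : ℂ) := by
  simp only [conjTranspose_smul, Complex.star_def, Complex.conj_ofReal, Matrix.smul_mul,
    Matrix.mul_smul, trace_smul, hρ.trace_conjTranspose_mul_self_mul_eq, smul_eq_mul]
  rcases eq_or_ne c 0 with rfl | hc
  · simp
  · push_cast
    field_simp

end Frobenius

theorem norm_sum_sq_div_sum_le_sum_norm_sq_div {ι E : Type*} [SeminormedAddCommGroup E]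
    (s : Finset ι) (v : ι → E) {w : ι → ℝ} (hw : ∀ i ∈ s, 0 < w i) :
    ‖∑ i ∈ s, v i‖ ^ 2 / ∑ i ∈ s, w i ≤ ∑ i ∈ s, ‖v i‖ ^ 2 / w i :=
  (div_le_div_of_nonneg_right (pow_le_pow_left₀ (norm_nonneg _) (norm_sum_le s v) 2)
    (Finset.sum_nonneg fun i hi => (hw i hi).le)).trans (Finset.sq_sum_div_le_sum_sq_div s _ hw)

section Refinement

variable {ι κ κ' : Type*} [Fintype κ'] [DecidableEq κ] {S : κ → Finset ι} {S' : κ' → Finset ι}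
  {σ : κ' → κ}

theorem Finset.eq_biUnion_of_refines [DecidableEq ι] (hSdisj : Pairwise (Disjoint on S))
    (hS'cover : ∀ i, ∃ l, i ∈ S' l) (hσ : ∀ l, S' l ⊆ S (σ l)) (k : κ) :
    S k = ({l | σ l = k} : Finset κ').biUnion S' := by
  ext i
  simp only [Finset.mem_biUnion, Finset.mem_filter, Finset.mem_univ, true_and]
  refine ⟨fun hi => ?_, fun ⟨l, hl, hi⟩ => hl ▸ hσ l hi⟩
  obtain ⟨l, hil⟩ := hS'cover i
  exact ⟨l, by_contra fun hne => Finset.disjoint_left.mp (hSdisj hne) (hσ l hil) hi, hil⟩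

theorem Finset.sum_eq_sum_sum_of_refines {M : Type*} [AddCommMonoid M]
    (hSdisj : Pairwise (Disjoint on S)) (hS'disj : Pairwise (Disjoint on S'))
    (hS'cover : ∀ i, ∃ l, i ∈ S' l) (hσ : ∀ l, S' l ⊆ S (σ l)) (f : ι → M) (k : κ) :
    ∑ i ∈ S k, f i = ∑ l with σ l = k, ∑ i ∈ S' l, f i := by
  classical
  rw [Finset.eq_biUnion_of_refines hSdisj hS'cover hσ k,
    Finset.sum_biUnion fun a _ b _ hab => hS'disj hab]

end Refinement

theorem stmt_4_general {n m G G' : ℕ}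
    (p : Fin m → ℝ) (hp : ∀ i, 0 < p i)
    (U : Fin m → Matrix (Fin n) (Fin n) ℂ)
    (S : Fin G → Finset (Fin m))
    (hSdisj : ∀ k l, k ≠ l → Disjoint (S k) (S l))
    (S' : Fin G' → Finset (Fin m))
    (hS'disj : ∀ k l, k ≠ l → Disjoint (S' k) (S' l))
    (hS'cover : ∀ i, ∃ k, i ∈ S' k)
    (hS'ne : ∀ k, (S' k).Nonempty)
    (hrefine : ∀ l, ∃ k, S' l ⊆ S k)
    (q : Fin G → ℝ) (hq : ∀ k, q k = ∑ i ∈ S k, p i)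
    (K : Fin G → Matrix (Fin n) (Fin n) ℂ)
    (hK : ∀ k, K k = ∑ i ∈ S k, ((p i / q k : ℝ) : ℂ) • U i)
    (q' : Fin G' → ℝ) (hq' : ∀ l, q' l = ∑ i ∈ S' l, p i)
    (K' : Fin G' → Matrix (Fin n) (Fin n) ℂ)
    (hK' : ∀ l, K' l = ∑ i ∈ S' l, ((p i / q' l : ℝ) : ℂ) • U i)
    (ρ : Matrix (Fin n) (Fin n) ℂ) (hρ : ρ.PosSemidef) :
    (∑ k, (q k : ℂ) * ((K k)ᴴ * K k * ρ).trace)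
      ≤ ∑ l, (q' l : ℂ) * ((K' l)ᴴ * K' l * ρ).trace := by
  choose σ hσ using hrefine
  have hsplit {M : Type} [AddCommMonoid M] (f : Fin m → M) (k : Fin G) :=
    Finset.sum_eq_sum_sum_of_refines (fun _ _ => hSdisj _ _) (fun _ _ => hS'disj _ _)
      hS'cover hσ f k
  set A : Finset (Fin m) → Matrix (Fin n) (Fin n) ℂ := fun T => ∑ i ∈ T, (p i : ℂ) • U i
  have hK_smul {T : Finset (Fin m)} {c : ℝ} :
      ∑ i ∈ T, ((p i / c : ℝ) : ℂ) • U i = ((c⁻¹ : ℝ) : ℂ) • A T := by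
    simp only [A, Finset.smul_sum, smul_smul, div_eq_inv_mul, Complex.ofReal_mul]
  simp only [hK, hK', hK_smul, hρ.ofReal_mul_trace_inv_smul_eq, ← Complex.ofReal_sum,
    Complex.real_le_real]
  rw [← Finset.sum_fiberwise Finset.univ σ]
  refine Finset.sum_le_sum fun k _ => ?_
  rw [hq, hsplit, show A (S k) = ∑ l with σ l = k, A (S' l) from hsplit _ k, Finset.sum_mul]
  simp only [← hq']
  exact norm_sum_sq_div_sum_le_sum_norm_sq_div _ _ fun l _ =>
    hq' l ▸ Finset.sum_pos (fun i _ => hp i) (hS'ne l)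

/-- monotonicity of the reduction factor under refinement: if every group
`S' l` of one partition is contained in some group `S k` of another, then
`R[{S_k}; ρ] ≤ R[{S'_l}; ρ]`. -/
theorem stmt_4 {n m G G' : ℕ}
    (p : Fin m → ℝ) (hp : ∀ i, 0 < p i) (hps : ∑ i, p i = 1)
    (U : Fin m → Matrix (Fin n) (Fin n) ℂ)
    (hU : ∀ i, U i ∈ Matrix.unitaryGroup (Fin n) ℂ)
    (S : Fin G → Finset (Fin m))
    (hSdisj : ∀ k l, k ≠ l → Disjoint (S k) (S l))
    (hScover : ∀ i, ∃ k, i ∈ S k)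
    (hSne : ∀ k, (S k).Nonempty)
    (S' : Fin G' → Finset (Fin m))
    (hS'disj : ∀ k l, k ≠ l → Disjoint (S' k) (S' l))
    (hS'cover : ∀ i, ∃ k, i ∈ S' k)
    (hS'ne : ∀ k, (S' k).Nonempty)
    (hrefine : ∀ l, ∃ k, S' l ⊆ S k)
    (q : Fin G → ℝ) (hq : ∀ k, q k = ∑ i ∈ S k, p i)
    (K : Fin G → Matrix (Fin n) (Fin n) ℂ)
    (hK : ∀ k, K k = ∑ i ∈ S k, ((p i / q k : ℝ) : ℂ) • U i)
    (q' : Fin G' → ℝ) (hq' : ∀ l, q' l = ∑ i ∈ S' l, p i)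
    (K' : Fin G' → Matrix (Fin n) (Fin n) ℂ)
    (hK' : ∀ l, K' l = ∑ i ∈ S' l, ((p i / q' l : ℝ) : ℂ) • U i)
    (ρ : Matrix (Fin n) (Fin n) ℂ) (hρ : ρ.PosSemidef) (hρtr : ρ.trace = 1) :
    (∑ k, (q k : ℂ) * ((K k)ᴴ * K k * ρ).trace)
      ≤ ∑ l, (q' l : ℂ) * ((K' l)ᴴ * K' l * ρ).trace :=
  stmt_4_general p hp U S hSdisj S' hS'disj hS'cover hS'ne hrefine q hq K hK q' hq' K' hK' ρ hρ
end

section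
/- Exact splitting identity for the reduction factor: suppose S_G is split into disjoint nonempty subsets S_A, S_B with S_A ∪ S_B = S_G. Let q_A = Σ_{i∈S_A} p_i, q_B = Σ_{i∈S_B} p_i, K_A = Σ_{i∈S_A}(p_i/q_A)U_i, K_B = Σ_{i∈S_B}(p_i/q_B)U_i, and O an observable. Then R^O[{S_k}_{k=1}^{G-1} ∪ {S_A,S_B}; ρ] − R^O[{S_k}_{k=1}^G; ρ] = (q_A q_B/(q_A+q_B)) · tr[(O K_A − O K_B)† (O K_A − O K_B) ρ] ≥ 0, where R^O[{S_k};ρ] = Σ_k q_k tr[O² K_k ρ K_k†]. -/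
/-!
Splitting `S_g` changes only the `g`-th term of `R^O`. The group operator is the weighted mean
`K_g = (q_A K_A + q_B K_B) / (q_A + q_B)`, and `K ↦ tr[O² K ρ Kᴴ] = tr[(O K)ᴴ (O K) ρ]` is a
Hermitian quadratic form, so the change `q_A Q(K_A) + q_B Q(K_B) - (q_A + q_B) Q(K_g)` is the
between-group variance `q_A q_B / (q_A + q_B) · Q(K_A - K_B)`, which is nonnegative as `ρ ⪰ 0`.
-/

open Matrix
open scoped ComplexOrder

noncomputable def mixture {ι M : Type*} [AddCommMonoid M] [Module ℂ M]
    (p : ι → ℝ) (U : ι → M) (s : Finset ι) : M :=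
  ∑ i ∈ s, ((p i / ∑ j ∈ s, p j : ℝ) : ℂ) • U i

theorem mixture_union {ι M : Type*} [DecidableEq ι] [AddCommMonoid M] [Module ℂ M]
    (p : ι → ℝ) (U : ι → M) {s t : Finset ι} (hst : Disjoint s t)
    (hs : ∑ i ∈ s, p i ≠ 0) (ht : ∑ i ∈ t, p i ≠ 0) :
    mixture p U (s ∪ t) =
      (((∑ i ∈ s, p i) / (∑ i ∈ s, p i + ∑ i ∈ t, p i) : ℝ) : ℂ) • mixture p U s
        + (((∑ i ∈ t, p i) / (∑ i ∈ s, p i + ∑ i ∈ t, p i) : ℝ) : ℂ) • mixture p U t := by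
  have hweight : ∀ u : Finset ι, ∑ i ∈ u, p i ≠ 0 → ∀ i,
      ((p i / (∑ j ∈ s, p j + ∑ j ∈ t, p j) : ℝ) : ℂ)
        = ((∑ j ∈ u, p j) / (∑ j ∈ s, p j + ∑ j ∈ t, p j) : ℝ)
          * ((p i / ∑ j ∈ u, p j : ℝ) : ℂ) := by
    intro u hu i
    rw [← Complex.ofReal_mul]
    congr 1
    field_simp
  simp only [mixture, Finset.smul_sum, smul_smul, ← hweight s hs, ← hweight t ht,
    Finset.sum_union hst]

theorem trace_sq_mul_mul_conjTranspose {m n : Type*} [Fintype m] [DecidableEq m] [Fintype n]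
    {O : Matrix m m ℂ} (hO : O.IsHermitian) (M : Matrix m n ℂ) (ρ : Matrix n n ℂ) :
    (O ^ 2 * (M * ρ * Mᴴ)).trace = ((O * M)ᴴ * (O * M) * ρ).trace := by
  rw [conjTranspose_mul, hO.eq, pow_two]
  simp only [Matrix.mul_assoc]
  rw [trace_mul_comm Mᴴ]
  simp only [Matrix.mul_assoc]

theorem weighted_trace_split {m n : Type*} [Fintype m] [Fintype n]
    (X Y : Matrix m n ℂ) (ρ : Matrix n n ℂ) {a b : ℝ} (hab : a + b ≠ 0) :
    (a : ℂ) * (Xᴴ * X * ρ).trace + (b : ℂ) * (Yᴴ * Y * ρ).trace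
      - ((a + b : ℝ) : ℂ) * ((((a / (a + b) : ℝ) : ℂ) • X + ((b / (a + b) : ℝ) : ℂ) • Y)ᴴ
          * (((a / (a + b) : ℝ) : ℂ) • X + ((b / (a + b) : ℝ) : ℂ) • Y) * ρ).trace
      = ((a * b / (a + b) : ℝ) : ℂ) * ((X - Y)ᴴ * (X - Y) * ρ).trace := by
  have hab' : (a : ℂ) + b ≠ 0 := by exact_mod_cast hab
  simp only [conjTranspose_add, conjTranspose_smul, conjTranspose_sub, Complex.star_def,
    Complex.conj_ofReal, Matrix.add_mul, Matrix.sub_mul, Matrix.mul_add, Matrix.mul_sub,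
    Matrix.smul_mul, Matrix.mul_smul, trace_add, trace_sub, trace_smul, smul_eq_mul]
  push_cast
  field_simp
  ring

theorem Matrix.PosSemidef.trace_conjTranspose_mul_self_mul_nonneg {m n : Type*} [Fintype m]
    [Fintype n] {ρ : Matrix n n ℂ} (hρ : ρ.PosSemidef) (X : Matrix m n ℂ) :
    0 ≤ (Xᴴ * X * ρ).trace := by
  rw [trace_mul_cycle, trace_mul_cycle]
  exact (hρ.mul_mul_conjTranspose_same X).trace_nonneg

theorem stmt_5_general {n m G : ℕ}
    (p : Fin m → ℝ) (hp : ∀ i, 0 < p i)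
    (U : Fin m → Matrix (Fin n) (Fin n) ℂ)
    (S : Fin G → Finset (Fin m))
    (g : Fin G)
    (SA SB : Finset (Fin m)) (hABdisj : Disjoint SA SB)
    (hAne : SA.Nonempty) (hBne : SB.Nonempty) (hABunion : SA ∪ SB = S g)
    (q : Fin G → ℝ) (hq : ∀ k, q k = ∑ i ∈ S k, p i)
    (K : Fin G → Matrix (Fin n) (Fin n) ℂ)
    (hK : ∀ k, K k = ∑ i ∈ S k, ((p i / q k : ℝ) : ℂ) • U i)
    (qA qB : ℝ) (hqA : qA = ∑ i ∈ SA, p i) (hqB : qB = ∑ i ∈ SB, p i)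
    (KA KB : Matrix (Fin n) (Fin n) ℂ)
    (hKA : KA = ∑ i ∈ SA, ((p i / qA : ℝ) : ℂ) • U i)
    (hKB : KB = ∑ i ∈ SB, ((p i / qB : ℝ) : ℂ) • U i)
    (O : Matrix (Fin n) (Fin n) ℂ) (hO : O.IsHermitian)
    (ρ : Matrix (Fin n) (Fin n) ℂ) (hρ : ρ.PosSemidef) :
    ((∑ k ∈ Finset.univ.erase g, (q k : ℂ) * (O ^ 2 * (K k * ρ * (K k)ᴴ)).trace)
        + (qA : ℂ) * (O ^ 2 * (KA * ρ * KAᴴ)).trace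
        + (qB : ℂ) * (O ^ 2 * (KB * ρ * KBᴴ)).trace)
      - (∑ k, (q k : ℂ) * (O ^ 2 * (K k * ρ * (K k)ᴴ)).trace)
      = ((qA * qB / (qA + qB) : ℝ) : ℂ) *
          ((O * KA - O * KB)ᴴ * (O * KA - O * KB) * ρ).trace ∧
    0 ≤ ((qA * qB / (qA + qB) : ℝ) : ℂ) *
          ((O * KA - O * KB)ᴴ * (O * KA - O * KB) * ρ).trace := by
  have hqA_pos : 0 < qA := hqA ▸ Finset.sum_pos (fun i _ => hp i) hAne
  have hqB_pos : 0 < qB := hqB ▸ Finset.sum_pos (fun i _ => hp i) hBne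
  have hqg : q g = qA + qB := by rw [hq, ← hABunion, Finset.sum_union hABdisj, hqA, hqB]
  have hKg : K g = ((qA / (qA + qB) : ℝ) : ℂ) • KA + ((qB / (qA + qB) : ℝ) : ℂ) • KB := by
    rw [hK, hq, ← hABunion, hKA, hKB, hqA, hqB]
    exact mixture_union p U hABdisj (hqA ▸ hqA_pos.ne') (hqB ▸ hqB_pos.ne')
  have hOKg : O * K g
      = ((qA / (qA + qB) : ℝ) : ℂ) • (O * KA) + ((qB / (qA + qB) : ℝ) : ℂ) • (O * KB) := by
    rw [hKg, Matrix.mul_add, Matrix.mul_smul, Matrix.mul_smul]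
  refine ⟨?_, mul_nonneg (Complex.zero_le_real.mpr
    (div_pos (mul_pos hqA_pos hqB_pos) (add_pos hqA_pos hqB_pos)).le)
    (hρ.trace_conjTranspose_mul_self_mul_nonneg _)⟩
  rw [← weighted_trace_split _ _ ρ (add_pos hqA_pos hqB_pos).ne', ← hOKg, ← hqg,
    ← Finset.add_sum_erase _ _ (Finset.mem_univ g)]
  simp only [trace_sq_mul_mul_conjTranspose hO]
  ring

/-- exact splitting identity for the reduction factor
`R^O[{S_k}; ρ] = ∑ k, q k tr[O² K k ρ K kᴴ]`: splitting the group `S g` into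
`S_A ∪ S_B` increases `R^O` by exactly
`(q_A q_B/(q_A+q_B)) tr[(O K_A − O K_B)ᴴ (O K_A − O K_B) ρ] ≥ 0`. -/
theorem stmt_5 {n m G : ℕ}
    (p : Fin m → ℝ) (hp : ∀ i, 0 < p i) (hps : ∑ i, p i = 1)
    (U : Fin m → Matrix (Fin n) (Fin n) ℂ)
    (hU : ∀ i, U i ∈ Matrix.unitaryGroup (Fin n) ℂ)
    (S : Fin G → Finset (Fin m))
    (hSdisj : ∀ k l, k ≠ l → Disjoint (S k) (S l))
    (hScover : ∀ i, ∃ k, i ∈ S k)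
    (hSne : ∀ k, (S k).Nonempty)
    (g : Fin G) (hSg : 2 ≤ (S g).card)
    (SA SB : Finset (Fin m)) (hABdisj : Disjoint SA SB)
    (hAne : SA.Nonempty) (hBne : SB.Nonempty) (hABunion : SA ∪ SB = S g)
    (q : Fin G → ℝ) (hq : ∀ k, q k = ∑ i ∈ S k, p i)
    (K : Fin G → Matrix (Fin n) (Fin n) ℂ)
    (hK : ∀ k, K k = ∑ i ∈ S k, ((p i / q k : ℝ) : ℂ) • U i)
    (qA qB : ℝ) (hqA : qA = ∑ i ∈ SA, p i) (hqB : qB = ∑ i ∈ SB, p i)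
    (KA KB : Matrix (Fin n) (Fin n) ℂ)
    (hKA : KA = ∑ i ∈ SA, ((p i / qA : ℝ) : ℂ) • U i)
    (hKB : KB = ∑ i ∈ SB, ((p i / qB : ℝ) : ℂ) • U i)
    (O : Matrix (Fin n) (Fin n) ℂ) (hO : O.IsHermitian)
    (ρ : Matrix (Fin n) (Fin n) ℂ) (hρ : ρ.PosSemidef) (hρtr : ρ.trace = 1) :
    ((∑ k ∈ Finset.univ.erase g, (q k : ℂ) * (O ^ 2 * (K k * ρ * (K k)ᴴ)).trace)
        + (qA : ℂ) * (O ^ 2 * (KA * ρ * KAᴴ)).trace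
        + (qB : ℂ) * (O ^ 2 * (KB * ρ * KBᴴ)).trace)
      - (∑ k, (q k : ℂ) * (O ^ 2 * (K k * ρ * (K k)ᴴ)).trace)
      = ((qA * qB / (qA + qB) : ℝ) : ℂ) *
          ((O * KA - O * KB)ᴴ * (O * KA - O * KB) * ρ).trace ∧
    0 ≤ ((qA * qB / (qA + qB) : ℝ) : ℂ) *
          ((O * KA - O * KB)ᴴ * (O * KA - O * KB) * ρ).trace :=
  stmt_5_general p hp U S g SA SB hABdisj hAne hBne hABunion q hq K hK qA qB hqA hqB KA KB hKA hKB O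
    hO ρ hρ
end

section
/- Split-subset upper bound for the reduction factor: with notation as above and O² ≤ ‖O²‖·I, if S_G is split into S_A and S_B, then R^O[{S_k}_{k=1}^{G-1} ∪ {S_A,S_B}; ρ] ≤ R^O[{S_k}_{k=1}^G; ρ] + 2‖O²‖ H(q_A,q_B), where H(a,b) = 2ab/(a+b) is the harmonic mean. -/
open Matrix
open scoped ComplexOrder

/-!
Put `q_g = q_A + q_B`, so that `q_g K_g = q_A K_A + q_B K_B`. The weighted parallel-axis
identity
`q_A K_A ρ K_Aᴴ + q_B K_B ρ K_Bᴴ = q_g K_g ρ K_gᴴ + (q_A q_B / q_g) (K_A - K_B) ρ (K_A - K_B)ᴴ`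
reduces the claim to `tr (O² (K_A - K_B) ρ (K_A - K_B)ᴴ) ≤ 4 ‖O²‖`. This holds because
`O² ≤ ‖O²‖ • 1` and `‖K_A - K_B‖ ≤ 2` in the operator norm, `K_A` and `K_B` being convex
combinations of unitaries.
-/

open scoped MatrixOrder Matrix.Norms.L2Operator

section

variable {ι : Type*} [Fintype ι] [DecidableEq ι]

theorem Matrix.PosSemidef.trace_mul_nonneg {A B : Matrix ι ι ℂ}
    (hA : A.PosSemidef) (hB : B.PosSemidef) : 0 ≤ (A * B).trace := by
  obtain ⟨C, rfl⟩ := CStarAlgebra.nonneg_iff_eq_star_mul_self.mp hA.nonneg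
  rw [Matrix.mul_assoc, trace_mul_comm, star_eq_conjTranspose]
  exact (hB.mul_mul_conjTranspose_same C).trace_nonneg

theorem Matrix.trace_mul_le_of_le_smul_one {X M : Matrix ι ι ℂ} {c : ℝ}
    (hX : X ≤ (c : ℂ) • 1) (hM : M.PosSemidef) : (X * M).trace ≤ c * M.trace := by
  have := (Matrix.le_iff.mp hX).trace_mul_nonneg hM
  rwa [Matrix.sub_mul, trace_sub, smul_mul, one_mul, trace_smul, smul_eq_mul, sub_nonneg]
    at this

theorem Matrix.trace_mul_mul_conjTranspose_le_norm_sq_mul (D : Matrix ι ι ℂ) {ρ : Matrix ι ι ℂ}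
    (hρ : ρ.PosSemidef) : (D * ρ * Dᴴ).trace ≤ ((‖D‖ ^ 2 : ℝ) : ℂ) * ρ.trace := by
  have hD : Dᴴ * D ≤ ((‖D‖ ^ 2 : ℝ) : ℂ) • 1 := by
    have := CStarAlgebra.star_mul_le_algebraMap_norm_sq (a := D)
    rwa [Algebra.algebraMap_eq_smul_one, ← Complex.coe_smul, star_eq_conjTranspose] at this
  rw [trace_mul_comm, ← Matrix.mul_assoc]
  exact trace_mul_le_of_le_smul_one hD hρ

theorem norm_sum_smul_unitary_le_one {E α : Type*} [NormedRing E] [StarRing E]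
    [CStarRing E] [NormedAlgebra ℂ E] (s : Finset α) {c : α → ℝ} (hc : ∀ i ∈ s, 0 ≤ c i)
    (hcs : ∑ i ∈ s, c i = 1) {U : α → E} (hU : ∀ i ∈ s, U i ∈ unitary E) :
    ‖∑ i ∈ s, (c i : ℂ) • U i‖ ≤ 1 := by
  have hU1 : ∀ i ∈ s, ‖U i‖ ≤ 1 := fun i hi => by
    rcases subsingleton_or_nontrivial E with hE | hE
    · simp [Subsingleton.elim (U i) 0]
    · exact (CStarRing.norm_of_mem_unitary (hU i hi)).le
  calc ‖∑ i ∈ s, (c i : ℂ) • U i‖ ≤ ∑ i ∈ s, c i * ‖U i‖ := by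
        refine (norm_sum_le _ _).trans (Finset.sum_le_sum fun i hi => ?_)
        rw [norm_smul, Complex.norm_real, Real.norm_of_nonneg (hc i hi)]
    _ ≤ ∑ i ∈ s, c i := Finset.sum_le_sum fun i hi =>
        mul_le_of_le_one_right (hc i hi) (hU1 i hi)
    _ = 1 := hcs

theorem smul_sum_div_smul_eq_sum_smul {M α : Type*} [AddCommMonoid M] [Module ℂ M]
    (s : Finset α) (w : α → ℝ) {q : ℝ} (hq : q ≠ 0) (v : α → M) :
    (q : ℂ) • ∑ i ∈ s, ((w i / q : ℝ) : ℂ) • v i = ∑ i ∈ s, (w i : ℂ) • v i := by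
  rw [Finset.smul_sum]
  refine Finset.sum_congr rfl fun i _ => ?_
  rw [smul_smul, ← Complex.ofReal_mul, mul_div_cancel₀ _ hq]

theorem smul_conj_add_smul_conj_eq {a b : ℝ} (hab : a + b ≠ 0) {A B C : Matrix ι ι ℂ}
    (hC : ((a + b : ℝ) : ℂ) • C = (a : ℂ) • A + (b : ℂ) • B) (ρ : Matrix ι ι ℂ) :
    (a : ℂ) • (A * ρ * Aᴴ) + (b : ℂ) • (B * ρ * Bᴴ)
      = ((a + b : ℝ) : ℂ) • (C * ρ * Cᴴ)
        + ((a * b / (a + b) : ℝ) : ℂ) • ((A - B) * ρ * (A - B)ᴴ) := by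
  have habC : ((a + b : ℝ) : ℂ) ≠ 0 := by exact_mod_cast hab
  apply smul_right_injective _ habC
  have hCC : ((a + b : ℝ) : ℂ) • (((a + b : ℝ) : ℂ) • (C * ρ * Cᴴ))
      = ((a : ℂ) • A + (b : ℂ) • B) * ρ * ((a : ℂ) • A + (b : ℂ) • B)ᴴ := by
    rw [← hC, conjTranspose_smul, Complex.star_def, Complex.conj_ofReal, smul_mul_assoc,
      smul_mul_assoc, mul_smul_comm]
  have hab' : ((a + b : ℝ) : ℂ) * ((a * b / (a + b) : ℝ) : ℂ) = a * b := by
    rw [← Complex.ofReal_mul, mul_div_cancel₀ _ hab, Complex.ofReal_mul]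
  simp only [smul_add, hCC, smul_smul, hab']
  simp only [conjTranspose_add, conjTranspose_sub, conjTranspose_smul, Complex.star_def,
    Complex.conj_ofReal, add_mul, mul_add, sub_mul, mul_sub, smul_mul_assoc, mul_smul_comm,
    smul_smul, smul_sub, smul_add]
  push_cast
  module

theorem trace_mul_smul_conj_add_smul_conj_le {a b c : ℝ} (ha : 0 < a) (hb : 0 < b)
    {A B C X ρ : Matrix ι ι ℂ} (hC : ((a + b : ℝ) : ℂ) • C = (a : ℂ) • A + (b : ℂ) • B)
    (hAB : ‖A - B‖ ≤ 2) (hX0 : X.PosSemidef) (hX : X ≤ (c : ℂ) • 1)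
    (hρ : ρ.PosSemidef) (hρtr : ρ.trace = 1) :
    (a : ℂ) * (X * (A * ρ * Aᴴ)).trace + (b : ℂ) * (X * (B * ρ * Bᴴ)).trace
      ≤ ((a + b : ℝ) : ℂ) * (X * (C * ρ * Cᴴ)).trace
        + ((2 * c * (2 * a * b / (a + b)) : ℝ) : ℂ) := by
  have hc : 0 ≤ c := by
    have h := (hX0.trace_mul_nonneg hρ).trans (trace_mul_le_of_le_smul_one hX hρ)
    rwa [hρtr, mul_one, Complex.zero_le_real] at h
  set M := (A - B) * ρ * (A - B)ᴴ
  have hM : (X * M).trace ≤ ((4 * c : ℝ) : ℂ) := calc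
    (X * M).trace ≤ c * M.trace :=
        trace_mul_le_of_le_smul_one hX (hρ.mul_mul_conjTranspose_same _)
    _ ≤ c * ((‖A - B‖ ^ 2 : ℝ) : ℂ) := by
        gcongr
        simpa only [hρtr, mul_one] using (A - B).trace_mul_mul_conjTranspose_le_norm_sq_mul hρ
    _ ≤ c * ((2 ^ 2 : ℝ) : ℂ) := by
        gcongr
        exact_mod_cast pow_le_pow_left₀ (norm_nonneg _) hAB 2
    _ = ((4 * c : ℝ) : ℂ) := by push_cast; ring
  have hsplit := congrArg (fun Y => (X * Y).trace)
    (smul_conj_add_smul_conj_eq (by positivity) hC ρ)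
  simp only [mul_add, mul_smul_comm, trace_add, trace_smul, smul_eq_mul] at hsplit
  rw [hsplit]
  gcongr
  calc ((a * b / (a + b) : ℝ) : ℂ) * (X * M).trace
        ≤ ((a * b / (a + b) : ℝ) : ℂ) * ((4 * c : ℝ) : ℂ) := by gcongr
    _ = ((2 * c * (2 * a * b / (a + b)) : ℝ) : ℂ) := by push_cast; ring

end

theorem stmt_6_general {n m G : ℕ}
    (p : Fin m → ℝ) (hp : ∀ i, 0 < p i)
    (U : Fin m → Matrix (Fin n) (Fin n) ℂ)
    (hU : ∀ i, U i ∈ Matrix.unitaryGroup (Fin n) ℂ)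
    (S : Fin G → Finset (Fin m))
    (g : Fin G)
    (SA SB : Finset (Fin m)) (hABdisj : Disjoint SA SB)
    (hAne : SA.Nonempty) (hBne : SB.Nonempty) (hABunion : SA ∪ SB = S g)
    (q : Fin G → ℝ) (hq : ∀ k, q k = ∑ i ∈ S k, p i)
    (K : Fin G → Matrix (Fin n) (Fin n) ℂ)
    (hK : ∀ k, K k = ∑ i ∈ S k, ((p i / q k : ℝ) : ℂ) • U i)
    (qA qB : ℝ) (hqA : qA = ∑ i ∈ SA, p i) (hqB : qB = ∑ i ∈ SB, p i)
    (KA KB : Matrix (Fin n) (Fin n) ℂ)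
    (hKA : KA = ∑ i ∈ SA, ((p i / qA : ℝ) : ℂ) • U i)
    (hKB : KB = ∑ i ∈ SB, ((p i / qB : ℝ) : ℂ) • U i)
    (O : Matrix (Fin n) (Fin n) ℂ) (hO : O.IsHermitian)
    (nO : ℝ) (hnO : ((nO : ℂ) • (1 : Matrix (Fin n) (Fin n) ℂ) - O ^ 2).PosSemidef)
    (ρ : Matrix (Fin n) (Fin n) ℂ) (hρ : ρ.PosSemidef) (hρtr : ρ.trace = 1) :
    ((∑ k ∈ Finset.univ.erase g, (q k : ℂ) * (O ^ 2 * (K k * ρ * (K k)ᴴ)).trace)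
        + (qA : ℂ) * (O ^ 2 * (KA * ρ * KAᴴ)).trace
        + (qB : ℂ) * (O ^ 2 * (KB * ρ * KBᴴ)).trace)
      ≤ (∑ k, (q k : ℂ) * (O ^ 2 * (K k * ρ * (K k)ᴴ)).trace)
        + ((2 * nO * (2 * qA * qB / (qA + qB)) : ℝ) : ℂ) := by
  have hqA0 : 0 < qA := hqA ▸ Finset.sum_pos (fun i _ => hp i) hAne
  have hqB0 : 0 < qB := hqB ▸ Finset.sum_pos (fun i _ => hp i) hBne
  have hqg : q g = qA + qB := by rw [hq g, ← hABunion, Finset.sum_union hABdisj, hqA, hqB]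
  have hKg : ((qA + qB : ℝ) : ℂ) • K g = (qA : ℂ) • KA + (qB : ℂ) • KB := by
    rw [← hqg, hK g, hKA, hKB, smul_sum_div_smul_eq_sum_smul _ _ (hqg ▸ by positivity),
      smul_sum_div_smul_eq_sum_smul _ _ hqA0.ne', smul_sum_div_smul_eq_sum_smul _ _ hqB0.ne',
      ← Finset.sum_union hABdisj, hABunion]
  have hnorm {s : Finset (Fin m)} {r : ℝ} (hr : r = ∑ i ∈ s, p i) (hr0 : 0 < r) :
      ‖∑ i ∈ s, ((p i / r : ℝ) : ℂ) • U i‖ ≤ 1 :=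
    norm_sum_smul_unitary_le_one s (fun i _ => div_nonneg (hp i).le hr0.le)
      (by rw [← Finset.sum_div, ← hr, div_self hr0.ne']) (fun i _ => hU i)
  have hKAB : ‖KA - KB‖ ≤ 2 := by
    rw [hKA, hKB]
    exact (norm_sub_le _ _).trans (by linarith [hnorm hqA hqA0, hnorm hqB hqB0])
  have hO2 : (O ^ 2).PosSemidef := by
    simpa only [sq, hO.eq] using posSemidef_conjTranspose_mul_self O
  have hsplit := trace_mul_smul_conj_add_smul_conj_le hqA0 hqB0 hKg hKAB hO2 hnO hρ hρtr
  rw [← Finset.sum_erase_add _ _ (Finset.mem_univ g), hqg, add_assoc, add_assoc]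
  exact add_le_add_right hsplit _

/-- split-subset upper bound for the reduction factor: with
`O² ≤ ‖O²‖·I` (encoded by `nO` with `nO • 1 - O² ⪰ 0`), splitting `S g` into
`S_A, S_B` increases `R^O` by at most `2‖O²‖ H(q_A, q_B)` where `H` is the
harmonic mean. -/
theorem stmt_6 {n m G : ℕ}
    (p : Fin m → ℝ) (hp : ∀ i, 0 < p i) (hps : ∑ i, p i = 1)
    (U : Fin m → Matrix (Fin n) (Fin n) ℂ)
    (hU : ∀ i, U i ∈ Matrix.unitaryGroup (Fin n) ℂ)
    (S : Fin G → Finset (Fin m))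
    (hSdisj : ∀ k l, k ≠ l → Disjoint (S k) (S l))
    (hScover : ∀ i, ∃ k, i ∈ S k)
    (hSne : ∀ k, (S k).Nonempty)
    (g : Fin G) (hSg : 2 ≤ (S g).card)
    (SA SB : Finset (Fin m)) (hABdisj : Disjoint SA SB)
    (hAne : SA.Nonempty) (hBne : SB.Nonempty) (hABunion : SA ∪ SB = S g)
    (q : Fin G → ℝ) (hq : ∀ k, q k = ∑ i ∈ S k, p i)
    (K : Fin G → Matrix (Fin n) (Fin n) ℂ)
    (hK : ∀ k, K k = ∑ i ∈ S k, ((p i / q k : ℝ) : ℂ) • U i)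
    (qA qB : ℝ) (hqA : qA = ∑ i ∈ SA, p i) (hqB : qB = ∑ i ∈ SB, p i)
    (KA KB : Matrix (Fin n) (Fin n) ℂ)
    (hKA : KA = ∑ i ∈ SA, ((p i / qA : ℝ) : ℂ) • U i)
    (hKB : KB = ∑ i ∈ SB, ((p i / qB : ℝ) : ℂ) • U i)
    (O : Matrix (Fin n) (Fin n) ℂ) (hO : O.IsHermitian)
    (nO : ℝ) (hnO : ((nO : ℂ) • (1 : Matrix (Fin n) (Fin n) ℂ) - O ^ 2).PosSemidef)
    (ρ : Matrix (Fin n) (Fin n) ℂ) (hρ : ρ.PosSemidef) (hρtr : ρ.trace = 1) :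
    ((∑ k ∈ Finset.univ.erase g, (q k : ℂ) * (O ^ 2 * (K k * ρ * (K k)ᴴ)).trace)
        + (qA : ℂ) * (O ^ 2 * (KA * ρ * KAᴴ)).trace
        + (qB : ℂ) * (O ^ 2 * (KB * ρ * KBᴴ)).trace)
      ≤ (∑ k, (q k : ℂ) * (O ^ 2 * (K k * ρ * (K k)ᴴ)).trace)
        + ((2 * nO * (2 * qA * qB / (qA + qB)) : ℝ) : ℂ) :=
  stmt_6_general p hp U hU S g SA SB hABdisj hAne hBne hABunion q hq K hK qA qB hqA hqB KA KB hKA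
    hKB O hO nO hnO ρ hρ hρtr
end

section
/- Generalized monotonicity with observable: if partition {S'_l} refines partition {S_k} of [m], then for any density matrix ρ and Hermitian O, tr[O² K_LCU ρ K_LCU†] ≤ R^O[{S_k}; ρ] ≤ R^O[{S'_l}; ρ] ≤ Σ_{i=1}^m p_i tr[O² U_i ρ U_i†], where R^O[{S_k};ρ] = Σ_k q_k tr[O² K_k ρ K_k†] and K_LCU = Σ_i p_i U_i. -/
/-!
Write `ρ = BᴴB`. Then `tr[O² X ρ Xᴴ] = ‖O X Bᴴ‖²` (Frobenius norm), a convex function of `X`, so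
Jensen's inequality applies to every block average `K_k = ∑_{i ∈ S_k} (p_i / q_k) U_i`.
The average over a disjoint union of blocks is the `q`-weighted average of the block averages,
hence merging blocks can only decrease `∑ q · tr[O² K ρ Kᴴ]`. The three inequalities are this
monotonicity for the refinements `{[m]} ≤ {S_k} ≤ {S'_l} ≤ {{i}}`.
-/
open Matrix
open scoped ComplexOrder

namespace Matrix

variable {m n : Type*} [Fintype m] [Fintype n]

open scoped Matrix.Norms.Frobenius

theorem trace_mul_conjTranspose_self_eq_frobenius_norm_sq (Y : Matrix m n ℂ) :
    (Y * Yᴴ).trace = ((‖Y‖ ^ 2 : ℝ) : ℂ) := by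
  rw [frobenius_norm_def, ← Real.sqrt_eq_rpow, Real.sq_sqrt (by positivity)]
  simp only [Real.rpow_two, trace, diag, mul_apply, conjTranspose_apply, Complex.star_def,
    Complex.mul_conj, Complex.normSq_eq_norm_sq]
  push_cast
  rfl

theorem IsHermitian.trace_sq_mul_mul_conjTranspose_self_mul [DecidableEq n] {O : Matrix n n ℂ}
    (hO : O.IsHermitian) (X B : Matrix n n ℂ) :
    (O ^ 2 * (X * (Bᴴ * B) * Xᴴ)).trace = ((‖O * X * Bᴴ‖ ^ 2 : ℝ) : ℂ) := by
  rw [← trace_mul_conjTranspose_self_eq_frobenius_norm_sq, pow_two, Matrix.mul_assoc,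
    trace_mul_comm]
  simp [conjTranspose_mul, hO.eq, Matrix.mul_assoc]

theorem PosSemidef.exists_linearMap_trace_sq_mul_eq_norm_sq [DecidableEq n] {O ρ : Matrix n n ℂ}
    (hO : O.IsHermitian) (hρ : ρ.PosSemidef) : ∃ L : Matrix n n ℂ →ₗ[ℝ] Matrix n n ℂ,
      ∀ X, (O ^ 2 * (X * ρ * Xᴴ)).trace = ((‖L X‖ ^ 2 : ℝ) : ℂ) := by
  open scoped MatrixOrder Matrix.Norms.L2Operator in
  obtain ⟨B, rfl⟩ := CStarAlgebra.nonneg_iff_eq_star_mul_self.mp hρ.nonneg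
  rw [star_eq_conjTranspose]
  refine ⟨(LinearMap.mulLeft ℝ O) ∘ₗ (LinearMap.mulRight ℝ Bᴴ), fun X => ?_⟩
  simpa [Matrix.mul_assoc] using hO.trace_sq_mul_mul_conjTranspose_self_mul X B

theorem IsHermitian.trace_sq_mul_sum_smul_le [DecidableEq n] {ι : Type*} {O ρ : Matrix n n ℂ}
    (hO : O.IsHermitian) (hρ : ρ.PosSemidef) (s : Finset ι) (w : ι → ℝ)
    (hw : ∀ i ∈ s, 0 ≤ w i) (hws : ∑ i ∈ s, w i = 1) (A : ι → Matrix n n ℂ) :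
    (O ^ 2 * ((∑ i ∈ s, (w i : ℂ) • A i) * ρ * (∑ i ∈ s, (w i : ℂ) • A i)ᴴ)).trace
      ≤ ∑ i ∈ s, (w i : ℂ) * (O ^ 2 * (A i * ρ * (A i)ᴴ)).trace := by
  obtain ⟨L, hL⟩ := hρ.exists_linearMap_trace_sq_mul_eq_norm_sq hO
  have hconvex : ConvexOn ℝ Set.univ fun X => ‖L X‖ ^ 2 :=
    ((convexOn_norm convex_univ).pow (fun _ _ => norm_nonneg _) 2).comp_linearMap L
  have hjensen := hconvex.map_sum_le (p := A) hw hws fun _ _ => Set.mem_univ _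
  simp only [hL, Complex.coe_smul]
  exact_mod_cast hjensen

end Matrix

open Finset Function

theorem Finset.eq_biUnion_filter_of_refines {ι κ κ' : Type*} [DecidableEq ι] [DecidableEq κ]
    [Fintype κ'] {S : κ → Finset ι} {S' : κ' → Finset ι} (hSdisj : Pairwise (Disjoint on S))
    (hS'cover : ∀ i, ∃ l, i ∈ S' l) {d : κ' → κ} (hd : ∀ l, S' l ⊆ S (d l)) (k : κ) :
    S k = (univ.filter fun l => d l = k).biUnion S' := by
  ext i
  simp only [mem_biUnion, mem_filter, mem_univ, true_and]
  refine ⟨fun hik => ?_, fun ⟨l, hl, hil⟩ => hl ▸ hd l hil⟩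
  obtain ⟨l, hil⟩ := hS'cover i
  refine ⟨l, ?_, hil⟩
  by_contra hne
  exact disjoint_left.mp (hSdisj hne) (hd l hil) hik

section Blocks

variable {ι : Type*} (p : ι → ℝ)

def blockWeight (s : Finset ι) : ℝ := ∑ i ∈ s, p i

noncomputable def blockAverage {E : Type*} [AddCommMonoid E] [Module ℂ E] (U : ι → E)
    (s : Finset ι) : E :=
  ∑ i ∈ s, ((p i / blockWeight p s : ℝ) : ℂ) • U i

theorem blockWeight_biUnion [DecidableEq ι] {κ : Type*} {T : Finset κ} {t : κ → Finset ι}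
    (ht : (T : Set κ).PairwiseDisjoint t) :
    blockWeight p (T.biUnion t) = ∑ l ∈ T, blockWeight p (t l) :=
  sum_biUnion ht

theorem blockAverage_biUnion [DecidableEq ι] {E : Type*} [AddCommMonoid E] [Module ℂ E]
    (U : ι → E) {κ : Type*} {T : Finset κ} {t : κ → Finset ι}
    (ht : (T : Set κ).PairwiseDisjoint t) (hpos : ∀ l ∈ T, blockWeight p (t l) ≠ 0) :
    blockAverage p U (T.biUnion t)
      = blockAverage (fun l => blockWeight p (t l)) (fun l => blockAverage p U (t l)) T := by
  rw [blockAverage, blockAverage, sum_biUnion ht, blockWeight_biUnion p ht]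
  refine sum_congr rfl fun l hl => ?_
  rw [blockAverage, smul_sum]
  refine sum_congr rfl fun i _ => ?_
  rw [smul_smul, ← Complex.ofReal_mul, div_mul_div_comm, mul_comm (blockWeight p (t l)),
    mul_div_mul_right _ _ (hpos l hl), blockWeight]

variable {n : Type*} [Fintype n] [DecidableEq n] {O ρ : Matrix n n ℂ}

theorem blockWeight_mul_trace_blockAverage_le (hO : O.IsHermitian) (hρ : ρ.PosSemidef)
    (U : ι → Matrix n n ℂ) {s : Finset ι} (hp : ∀ i ∈ s, 0 ≤ p i) (hs : 0 < blockWeight p s) :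
    (blockWeight p s : ℂ) * (O ^ 2 * (blockAverage p U s * ρ * (blockAverage p U s)ᴴ)).trace
      ≤ ∑ i ∈ s, (p i : ℂ) * (O ^ 2 * (U i * ρ * (U i)ᴴ)).trace := by
  have hjensen := hO.trace_sq_mul_sum_smul_le hρ s (fun i => p i / blockWeight p s)
    (fun i hi => div_nonneg (hp i hi) hs.le) (by rw [← sum_div]; exact div_self hs.ne') U
  calc _ ≤ (blockWeight p s : ℂ)
        * ∑ i ∈ s, ((p i / blockWeight p s : ℝ) : ℂ) * (O ^ 2 * (U i * ρ * (U i)ᴴ)).trace :=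
        mul_le_mul_of_nonneg_left hjensen (Complex.zero_le_real.2 hs.le)
    _ = _ := by
        rw [mul_sum]
        refine sum_congr rfl fun i _ => ?_
        rw [← mul_assoc, ← Complex.ofReal_mul, mul_div_cancel₀ _ hs.ne']

theorem blockWeight_mul_trace_blockAverage_biUnion_le [DecidableEq ι] (hO : O.IsHermitian)
    (hρ : ρ.PosSemidef) (U : ι → Matrix n n ℂ) {κ : Type*} {T : Finset κ} {t : κ → Finset ι}
    (ht : (T : Set κ).PairwiseDisjoint t) (hpos : ∀ l ∈ T, 0 < blockWeight p (t l)) :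
    (blockWeight p (T.biUnion t) : ℂ)
        * (O ^ 2 * (blockAverage p U (T.biUnion t) * ρ * (blockAverage p U (T.biUnion t))ᴴ)).trace
      ≤ ∑ l ∈ T, (blockWeight p (t l) : ℂ)
        * (O ^ 2 * (blockAverage p U (t l) * ρ * (blockAverage p U (t l))ᴴ)).trace := by
  rcases T.eq_empty_or_nonempty with rfl | hT
  · simp [blockWeight]
  rw [blockAverage_biUnion p U ht fun l hl => (hpos l hl).ne']
  convert blockWeight_mul_trace_blockAverage_le _ hO hρ _ (fun l hl => (hpos l hl).le) _ using 3
  · exact blockWeight_biUnion p ht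
  · exact sum_pos hpos hT

theorem sum_blockWeight_mul_trace_blockAverage_le_of_refines (hO : O.IsHermitian)
    (hρ : ρ.PosSemidef) (U : ι → Matrix n n ℂ) {κ κ' : Type*} [Fintype κ] [Fintype κ']
    {S : κ → Finset ι} {S' : κ' → Finset ι} (hSdisj : Pairwise (Disjoint on S))
    (hS'disj : Pairwise (Disjoint on S')) (hS'cover : ∀ i, ∃ l, i ∈ S' l)
    (hrefine : ∀ l, ∃ k, S' l ⊆ S k) (hpos : ∀ l, 0 < blockWeight p (S' l)) :
    ∑ k, (blockWeight p (S k) : ℂ)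
        * (O ^ 2 * (blockAverage p U (S k) * ρ * (blockAverage p U (S k))ᴴ)).trace
      ≤ ∑ l, (blockWeight p (S' l) : ℂ)
        * (O ^ 2 * (blockAverage p U (S' l) * ρ * (blockAverage p U (S' l))ᴴ)).trace := by
  classical
  choose d hd using hrefine
  calc _ ≤ ∑ k, ∑ l ∈ univ.filter fun l => d l = k, (blockWeight p (S' l) : ℂ)
          * (O ^ 2 * (blockAverage p U (S' l) * ρ * (blockAverage p U (S' l))ᴴ)).trace := by
        refine sum_le_sum fun k _ => ?_
        rw [eq_biUnion_filter_of_refines hSdisj hS'cover hd k]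
        exact blockWeight_mul_trace_blockAverage_biUnion_le p hO hρ U
          (fun l _ l' _ hll' => hS'disj hll') fun l _ => hpos l
    _ = _ := sum_fiberwise _ _ _

end Blocks

theorem stmt_8_general {n m G G' : ℕ}
    (p : Fin m → ℝ) (hp : ∀ i, 0 < p i) (hps : ∑ i, p i = 1)
    (U : Fin m → Matrix (Fin n) (Fin n) ℂ)
    (S : Fin G → Finset (Fin m))
    (hSdisj : ∀ k l, k ≠ l → Disjoint (S k) (S l))
    (hScover : ∀ i, ∃ k, i ∈ S k)
    (hSne : ∀ k, (S k).Nonempty)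
    (S' : Fin G' → Finset (Fin m))
    (hS'disj : ∀ k l, k ≠ l → Disjoint (S' k) (S' l))
    (hS'cover : ∀ i, ∃ k, i ∈ S' k)
    (hS'ne : ∀ k, (S' k).Nonempty)
    (hrefine : ∀ l, ∃ k, S' l ⊆ S k)
    (q : Fin G → ℝ) (hq : ∀ k, q k = ∑ i ∈ S k, p i)
    (K : Fin G → Matrix (Fin n) (Fin n) ℂ)
    (hK : ∀ k, K k = ∑ i ∈ S k, ((p i / q k : ℝ) : ℂ) • U i)
    (q' : Fin G' → ℝ) (hq' : ∀ l, q' l = ∑ i ∈ S' l, p i)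
    (K' : Fin G' → Matrix (Fin n) (Fin n) ℂ)
    (hK' : ∀ l, K' l = ∑ i ∈ S' l, ((p i / q' l : ℝ) : ℂ) • U i)
    (O : Matrix (Fin n) (Fin n) ℂ) (hO : O.IsHermitian)
    (ρ : Matrix (Fin n) (Fin n) ℂ) (hρ : ρ.PosSemidef) :
    (O ^ 2 * ((∑ i, (p i : ℂ) • U i) * ρ * (∑ i, (p i : ℂ) • U i)ᴴ)).trace
        ≤ ∑ k, (q k : ℂ) * (O ^ 2 * (K k * ρ * (K k)ᴴ)).trace ∧
    (∑ k, (q k : ℂ) * (O ^ 2 * (K k * ρ * (K k)ᴴ)).trace)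
        ≤ ∑ l, (q' l : ℂ) * (O ^ 2 * (K' l * ρ * (K' l)ᴴ)).trace ∧
    (∑ l, (q' l : ℂ) * (O ^ 2 * (K' l * ρ * (K' l)ᴴ)).trace)
        ≤ ∑ i, (p i : ℂ) * (O ^ 2 * (U i * ρ * (U i)ᴴ)).trace := by
  obtain rfl : q = fun k => blockWeight p (S k) := funext hq
  obtain rfl : K = fun k => blockAverage p U (S k) := funext hK
  obtain rfl : q' = fun l => blockWeight p (S' l) := funext hq'
  obtain rfl : K' = fun l => blockAverage p U (S' l) := funext hK'
  have hpos : ∀ s : Finset (Fin m), s.Nonempty → 0 < blockWeight p s :=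
    fun s hs => sum_pos (fun i _ => hp i) hs
  refine ⟨?_, sum_blockWeight_mul_trace_blockAverage_le_of_refines p hO hρ U hSdisj hS'disj
    hS'cover hrefine fun l => hpos _ (hS'ne l), ?_⟩
  · have hcoarsen := sum_blockWeight_mul_trace_blockAverage_le_of_refines p hO hρ U
      (S := fun _ : Unit => univ) Subsingleton.pairwise hSdisj hScover
      (fun _ => ⟨(), subset_univ _⟩) fun k => hpos _ (hSne k)
    simpa [blockWeight, blockAverage, hps] using hcoarsen
  · have hrefine_singletons := sum_blockWeight_mul_trace_blockAverage_le_of_refines p hO hρ U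
      (S' := fun i => {i}) hS'disj (fun i j hij => disjoint_singleton.2 hij)
      (fun i => ⟨i, mem_singleton_self i⟩)
      (fun i => (hS'cover i).imp fun _ => singleton_subset_iff.2) fun i => by
        simpa [blockWeight] using hp i
    simpa [blockWeight, blockAverage, fun i => (hp i).ne'] using hrefine_singletons

/-- generalized monotonicity with observable: if `{S'_l}` refines `{S_k}`,
then `tr[O² K_LCU ρ K_LCUᴴ] ≤ R^O[{S_k}; ρ] ≤ R^O[{S'_l}; ρ] ≤ ∑ i, p i tr[O² U i ρ U iᴴ]`. -/
theorem stmt_8 {n m G G' : ℕ}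
    (p : Fin m → ℝ) (hp : ∀ i, 0 < p i) (hps : ∑ i, p i = 1)
    (U : Fin m → Matrix (Fin n) (Fin n) ℂ)
    (hU : ∀ i, U i ∈ Matrix.unitaryGroup (Fin n) ℂ)
    (S : Fin G → Finset (Fin m))
    (hSdisj : ∀ k l, k ≠ l → Disjoint (S k) (S l))
    (hScover : ∀ i, ∃ k, i ∈ S k)
    (hSne : ∀ k, (S k).Nonempty)
    (S' : Fin G' → Finset (Fin m))
    (hS'disj : ∀ k l, k ≠ l → Disjoint (S' k) (S' l))
    (hS'cover : ∀ i, ∃ k, i ∈ S' k)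
    (hS'ne : ∀ k, (S' k).Nonempty)
    (hrefine : ∀ l, ∃ k, S' l ⊆ S k)
    (q : Fin G → ℝ) (hq : ∀ k, q k = ∑ i ∈ S k, p i)
    (K : Fin G → Matrix (Fin n) (Fin n) ℂ)
    (hK : ∀ k, K k = ∑ i ∈ S k, ((p i / q k : ℝ) : ℂ) • U i)
    (q' : Fin G' → ℝ) (hq' : ∀ l, q' l = ∑ i ∈ S' l, p i)
    (K' : Fin G' → Matrix (Fin n) (Fin n) ℂ)
    (hK' : ∀ l, K' l = ∑ i ∈ S' l, ((p i / q' l : ℝ) : ℂ) • U i)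
    (O : Matrix (Fin n) (Fin n) ℂ) (hO : O.IsHermitian)
    (ρ : Matrix (Fin n) (Fin n) ℂ) (hρ : ρ.PosSemidef) (hρtr : ρ.trace = 1) :
    (O ^ 2 * ((∑ i, (p i : ℂ) • U i) * ρ * (∑ i, (p i : ℂ) • U i)ᴴ)).trace
        ≤ ∑ k, (q k : ℂ) * (O ^ 2 * (K k * ρ * (K k)ᴴ)).trace ∧
    (∑ k, (q k : ℂ) * (O ^ 2 * (K k * ρ * (K k)ᴴ)).trace)
        ≤ ∑ l, (q' l : ℂ) * (O ^ 2 * (K' l * ρ * (K' l)ᴴ)).trace ∧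
    (∑ l, (q' l : ℂ) * (O ^ 2 * (K' l * ρ * (K' l)ᴴ)).trace)
        ≤ ∑ i, (p i : ℂ) * (O ^ 2 * (U i * ρ * (U i)ᴴ)).trace :=
  stmt_8_general p hp hps U S hSdisj hScover hSne S' hS'disj hS'cover hS'ne hrefine q hq K hK q' hq'
    K' hK' O hO ρ hρ
end

section
/- Two-group fragmented bound: for a partition {S_A, S_B} of [m], the partition consisting of S_A together with all singletons {i} for i ∈ S_B satisfies R[{S_A} ∪ {{i}: i ∈ S_B}; ρ] ≤ P + q_B + 2H(q_A, q_B), where P = tr[K_LCU† K_LCU ρ], q_A = Σ_{i∈S_A} p_i, q_B = Σ_{i∈S_B} p_i, and H is the harmonic mean. -/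
/-!
For a density matrix `ρ`, `‖A‖ ^ 2 = tr[Aᴴ A ρ]` is the square of a seminorm on matrices
(`Matrix.toMatrixSeminormedAddCommGroup ρ`), and every unitary has norm `1` in it. Writing
`K_LCU = q_A K_A + Y` with `Y = ∑_{i ∈ S_B} p_i U_i`, the triangle inequality gives `‖K_A‖ ≤ 1` and
`‖Y‖ ≤ q_B`, and the reverse triangle inequality `q_A ‖K_A‖ - ‖Y‖ ≤ ‖K_LCU‖` then yields
`q_A ‖K_A‖ ^ 2 ≤ P + 3 q_A q_B`, which is below `P + 2 H(q_A, q_B) = P + 4 q_A q_B`.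
-/

open Matrix
open scoped ComplexOrder

lemma mul_norm_sq_le_norm_smul_add_sq {𝕜 E : Type*} [RCLike 𝕜] [SeminormedAddCommGroup E]
    [NormedSpace 𝕜 E] {a b : ℝ} (ha : 0 ≤ a) (hb : 0 ≤ b) (hab : a + b = 1) {x y : E}
    (hx : ‖x‖ ≤ 1) (hy : ‖y‖ ≤ b) :
    a * ‖x‖ ^ 2 ≤ ‖(a : 𝕜) • x + y‖ ^ 2 + 3 * a * b := by
  have hax : ‖(a : 𝕜) • x‖ = a * ‖x‖ := by rw [norm_smul, RCLike.norm_ofReal, abs_of_nonneg ha]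
  have hrev : |a * ‖x‖ - ‖y‖| ≤ ‖(a : 𝕜) • x + y‖ := by
    simpa [hax] using abs_norm_sub_norm_le ((a : 𝕜) • x) (-y)
  have hsq := sq_le_sq' (abs_le.mp hrev).1 (abs_le.mp hrev).2
  have hx0 := norm_nonneg x
  have hy0 := norm_nonneg y
  nlinarith [mul_le_mul hx hy hy0 zero_le_one, mul_nonneg ha hb, mul_le_mul hx hx hx0 zero_le_one]

section
variable {𝕜 n : Type*} [RCLike 𝕜] [Fintype n] {ρ : Matrix n n 𝕜}

lemma trace_conjTranspose_mul_self_mul_eq_norm_sq (hρ : ρ.PosSemidef) (A : Matrix n n 𝕜) :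
    letI := ρ.toMatrixSeminormedAddCommGroup hρ
    (Aᴴ * A * ρ).trace = ((‖A‖ ^ 2 : ℝ) : 𝕜) := by
  let := ρ.toMatrixSeminormedAddCommGroup hρ
  let := ρ.toMatrixInnerProductSpace hρ
  rw [RCLike.ofReal_pow, ← inner_self_eq_norm_sq_to_K (𝕜 := 𝕜), ← trace_mul_cycle]
  rfl

lemma norm_eq_one_of_mem_unitaryGroup_of_trace_eq_one [DecidableEq n] (hρ : ρ.PosSemidef)
    (hρtr : ρ.trace = 1) {U : Matrix n n 𝕜} (hU : U ∈ unitaryGroup n 𝕜) :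
    letI := ρ.toMatrixSeminormedAddCommGroup hρ
    ‖U‖ = 1 := by
  let := ρ.toMatrixSeminormedAddCommGroup hρ
  have h := trace_conjTranspose_mul_self_mul_eq_norm_sq hρ U
  rw [← star_eq_conjTranspose, hU.1, one_mul, hρtr] at h
  have h' : ‖U‖ ^ 2 = 1 := by exact_mod_cast h.symm
  exact (pow_eq_one_iff_of_nonneg (norm_nonneg U) two_ne_zero).mp h'

end

lemma norm_sum_smul_le_sum {ι 𝕜 E : Type*} [RCLike 𝕜] [SeminormedAddCommGroup E]
    [NormedSpace 𝕜 E] (s : Finset ι) {p : ι → ℝ} (hp : ∀ i ∈ s, 0 ≤ p i) {v : ι → E}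
    (hv : ∀ i ∈ s, ‖v i‖ ≤ 1) : ‖∑ i ∈ s, (p i : 𝕜) • v i‖ ≤ ∑ i ∈ s, p i := by
  refine (norm_sum_le _ _).trans (Finset.sum_le_sum fun i hi => ?_)
  rw [norm_smul, RCLike.norm_ofReal, abs_of_nonneg (hp i hi)]
  exact mul_le_of_le_one_right (hp i hi) (hv i hi)

theorem stmt_9_general {n m : ℕ}
    (p : Fin m → ℝ) (hp : ∀ i, 0 ≤ p i) (hps : ∑ i, p i = 1)
    (U : Fin m → Matrix (Fin n) (Fin n) ℂ)
    (hU : ∀ i, U i ∈ Matrix.unitaryGroup (Fin n) ℂ)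
    (SA SB : Finset (Fin m)) (hABdisj : Disjoint SA SB)
    (hABunion : SA ∪ SB = Finset.univ)
    (qA qB : ℝ) (hqA : qA = ∑ i ∈ SA, p i) (hqB : qB = ∑ i ∈ SB, p i)
    (hqApos : 0 < qA) (hqBpos : 0 < qB)
    (KA : Matrix (Fin n) (Fin n) ℂ)
    (hKA : KA = ∑ i ∈ SA, ((p i / qA : ℝ) : ℂ) • U i)
    (ρ : Matrix (Fin n) (Fin n) ℂ) (hρ : ρ.PosSemidef) (hρtr : ρ.trace = 1) :
    ((qA : ℂ) * (KAᴴ * KA * ρ).trace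
        + ∑ i ∈ SB, (p i : ℂ) * ((U i)ᴴ * U i * ρ).trace)
      ≤ ((∑ i, (p i : ℂ) • U i)ᴴ * (∑ i, (p i : ℂ) • U i) * ρ).trace
        + ((qB + 2 * (2 * qA * qB / (qA + qB)) : ℝ) : ℂ) := by
  let := ρ.toMatrixSeminormedAddCommGroup hρ
  let := ρ.toMatrixInnerProductSpace hρ
  have hq : qA + qB = 1 := by rw [hqA, hqB, ← Finset.sum_union hABdisj, hABunion, hps]
  have hUnorm (i) : ‖U i‖ ≤ 1 :=
    (norm_eq_one_of_mem_unitaryGroup_of_trace_eq_one hρ hρtr (hU i)).le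
  have hKA_smul : (qA : ℂ) • KA = ∑ i ∈ SA, (p i : ℂ) • U i := by
    rw [hKA, Finset.smul_sum]
    refine Finset.sum_congr rfl fun i _ => ?_
    rw [smul_smul, ← Complex.ofReal_mul, mul_div_cancel₀ _ hqApos.ne']
  have hK : ∑ i, (p i : ℂ) • U i = (qA : ℂ) • KA + ∑ i ∈ SB, (p i : ℂ) • U i := by
    rw [hKA_smul, ← Finset.sum_union hABdisj, hABunion]
  have hKA_norm : ‖KA‖ ≤ 1 := by
    have h := norm_sum_smul_le_sum (𝕜 := ℂ) SA (fun i _ => hp i) (fun i _ => hUnorm i)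
    simp only [RCLike.ofReal_eq_complex_ofReal] at h
    rw [← hKA_smul, ← hqA, norm_smul, Complex.norm_real, Real.norm_of_nonneg hqApos.le] at h
    exact (mul_le_iff_le_one_right hqApos).mp (by linarith)
  have hB_norm : ‖∑ i ∈ SB, (p i : ℂ) • U i‖ ≤ qB :=
    hqB ▸ norm_sum_smul_le_sum (𝕜 := ℂ) SB (fun i _ => hp i) (fun i _ => hUnorm i)
  have hB_trace : ∑ i ∈ SB, (p i : ℂ) * ((U i)ᴴ * U i * ρ).trace = qB := by
    simp_rw [← star_eq_conjTranspose, fun i => (hU i).1, one_mul, hρtr, mul_one, hqB]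
    exact (Complex.ofReal_sum _ _).symm
  have key := mul_norm_sq_le_norm_smul_add_sq (𝕜 := ℂ) hqApos.le hqBpos.le hq hKA_norm hB_norm
  rw [trace_conjTranspose_mul_self_mul_eq_norm_sq hρ,
    trace_conjTranspose_mul_self_mul_eq_norm_sq hρ, hK, hB_trace, hq, div_one]
  simp only [RCLike.ofReal_eq_complex_ofReal] at key ⊢
  rw [← Complex.ofReal_mul, ← Complex.ofReal_add, ← Complex.ofReal_add, Complex.real_le_real]
  linarith [mul_pos hqApos hqBpos]

/-- two-group fragmented bound: for a partition `{S_A, S_B}` of `[m]`,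
`R[{S_A} ∪ {{i} : i ∈ S_B}; ρ] ≤ P + q_B + 2 H(q_A, q_B)` where
`P = tr[K_LCUᴴ K_LCU ρ]` and `H(a,b) = 2ab/(a+b)`. -/
theorem stmt_9 {n m : ℕ}
    (p : Fin m → ℝ) (hp : ∀ i, 0 ≤ p i) (hps : ∑ i, p i = 1)
    (U : Fin m → Matrix (Fin n) (Fin n) ℂ)
    (hU : ∀ i, U i ∈ Matrix.unitaryGroup (Fin n) ℂ)
    (SA SB : Finset (Fin m)) (hABdisj : Disjoint SA SB)
    (hAne : SA.Nonempty) (hBne : SB.Nonempty)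
    (hABunion : SA ∪ SB = Finset.univ) (hBcard : 2 ≤ SB.card)
    (qA qB : ℝ) (hqA : qA = ∑ i ∈ SA, p i) (hqB : qB = ∑ i ∈ SB, p i)
    (hqApos : 0 < qA) (hqBpos : 0 < qB)
    (KA : Matrix (Fin n) (Fin n) ℂ)
    (hKA : KA = ∑ i ∈ SA, ((p i / qA : ℝ) : ℂ) • U i)
    (ρ : Matrix (Fin n) (Fin n) ℂ) (hρ : ρ.PosSemidef) (hρtr : ρ.trace = 1) :
    ((qA : ℂ) * (KAᴴ * KA * ρ).trace
        + ∑ i ∈ SB, (p i : ℂ) * ((U i)ᴴ * U i * ρ).trace)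
      ≤ ((∑ i, (p i : ℂ) • U i)ᴴ * (∑ i, (p i : ℂ) • U i) * ρ).trace
        + ((qB + 2 * (2 * qA * qB / (qA + qB)) : ℝ) : ℂ) :=
  stmt_9_general p hp hps U hU SA SB hABdisj hABunion qA qB hqA hqB hqApos hqBpos KA hKA ρ hρ hρtr
end

section
/- Sample complexity of ratio estimation (Bernstein): let (X_i, Y_i), i = 1,…,N be i.i.d. copies of bounded random variables (X,Y) with |X|, |Y| ≤ c, means μ_X, μ_Y (μ_Y ≠ 0), variance bounds Var[X] ≤ σ̃_X², Var[Y] ≤ σ̃_Y², and |μ_X/μ_Y| ≤ c'. For ε ∈ (0, 2c'] and δ > 0, if N ≥ 32 ln(4/δ) · max{σ̃_X²/(|μ_Y|²ε²) + c/(6|μ_Y|ε), (c')²σ̃_Y²/(|μ_Y|²ε²) + c'c/(6|μ_Y|ε)}, then Pr(|X̄_N/Ȳ_N − μ_X/μ_Y| ≤ ε) ≥ 1 − δ, where X̄_N, Ȳ_N are the sample means. -/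
/-!
For a centred variable `W` with `|W| ≤ b` and variance at most `v`, comparing the exponential
series termwise with a geometric series (`(k + 2)! ≥ 2 * 3 ^ k`) gives
`E[exp (l W)] ≤ exp (l² v / (2 (1 - l b / 3)))` for `0 ≤ l < 3 / b`, and Chernoff's bound with
`l = t / (v + b t / 3)` yields Bernstein's tail `exp (-N t² / (2 v + 2 b t / 3))` for a sum of `N`
i.i.d. copies exceeding `N t`.

Apply this to both coordinates, centred (so of range `2 c`), with deviations
`t₁ = |μY| ε / 4` and `t₂ = |μY| ε / (4 c')`: the sample-size assumption makes each two-sided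
tail at most `δ / 2`. Outside these two events `|Ȳ| ≥ |μY| / 2`, and writing
`X̄ / Ȳ - μX / μY = ((X̄ - μX) μY - μX (Ȳ - μY)) / (Ȳ μY)` bounds the error by `ε`.
-/

open MeasureTheory ProbabilityTheory

lemma Nat.two_mul_three_pow_le_factorial_add_two (n : ℕ) : 2 * 3 ^ n ≤ (n + 2).factorial := by
  induction n with
  | zero => decide
  | succ n ih =>
    rw [Nat.factorial_succ, pow_succ]
    nlinarith

lemma Real.exp_le_one_add_add_sq_div {x u : ℝ} (hxu : |x| ≤ u) (hu : u < 3) :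
    Real.exp x ≤ 1 + x + x ^ 2 / (2 * (1 - u / 3)) := by
  have hu0 : 0 ≤ u / 3 := by linarith [abs_nonneg x]
  have hexp : HasSum (fun k : ℕ => x ^ (k + 2) / (k + 2).factorial) (Real.exp x - (1 + x)) := by
    have h := (hasSum_nat_add_iff' 2).2 (NormedSpace.expSeries_div_hasSum_exp x)
    simpa [Finset.sum_range_succ, ← Real.exp_eq_exp_ℝ] using h
  have hgeom : HasSum (fun k : ℕ => x ^ 2 / 2 * (u / 3) ^ k) (x ^ 2 / (2 * (1 - u / 3))) := by
    have h := (hasSum_geometric_of_lt_one hu0 (by linarith)).mul_left (x ^ 2 / 2)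
    rwa [← div_eq_mul_inv, div_div] at h
  have hterm (k : ℕ) : x ^ (k + 2) / (k + 2).factorial ≤ x ^ 2 / 2 * (u / 3) ^ k := by
    have hfact : (2 * 3 ^ k : ℝ) ≤ (k + 2).factorial := by
      exact_mod_cast Nat.two_mul_three_pow_le_factorial_add_two k
    have hpow : x ^ (k + 2) ≤ x ^ 2 * u ^ k :=
      calc x ^ (k + 2) ≤ |x| ^ (k + 2) := by rw [← abs_pow]; exact le_abs_self _
        _ = x ^ 2 * |x| ^ k := by rw [pow_add, sq_abs, mul_comm]
        _ ≤ x ^ 2 * u ^ k := by gcongr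
    calc x ^ (k + 2) / (k + 2).factorial ≤ x ^ 2 * u ^ k / (2 * 3 ^ k) := by
          gcongr
          exact mul_nonneg (sq_nonneg x) (pow_nonneg (by linarith) k)
      _ = x ^ 2 / 2 * (u / 3) ^ k := by rw [div_pow]; ring
  linarith [hasSum_le hterm hexp hgeom]

lemma abs_div_sub_div_le {x y a b c' ε : ℝ} (hb : b ≠ 0) (hc' : |a / b| ≤ c') (hε : 0 < ε)
    (hε2 : ε ≤ 2 * c') (hx : |x - a| ≤ |b| * ε / 4) (hy : |y - b| ≤ |b| * ε / (4 * c')) :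
    |x / y - a / b| ≤ ε := by
  have hb0 : 0 < |b| := abs_pos.2 hb
  have hc'0 : 0 < c' := by linarith
  have ha : |a| ≤ c' * |b| := by rwa [abs_div, div_le_iff₀ hb0] at hc'
  have hyb : |a| * |y - b| ≤ |b| ^ 2 * ε / 4 := by
    calc |a| * |y - b| ≤ c' * |b| * (|b| * ε / (4 * c')) := by gcongr
      _ = |b| ^ 2 * ε / 4 := by field_simp
  have hy_half : |b| / 2 ≤ |y| := by
    have : |b| * ε / (4 * c') ≤ |b| / 2 := by
      rw [div_le_div_iff₀ (by positivity) (by positivity)]; nlinarith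
    linarith [abs_sub_abs_le_abs_sub b y, abs_sub_comm y b]
  have hy0 : y ≠ 0 := abs_pos.1 (by linarith)
  calc |x / y - a / b| = |(x - a) * b - a * (y - b)| / (|y| * |b|) := by
        rw [← abs_mul, ← abs_div]; congr 1; field_simp; ring
    _ ≤ (|x - a| * |b| + |a| * |y - b|) / (|b| / 2 * |b|) := by
        gcongr
        exact (abs_sub _ _).trans (by rw [abs_mul, abs_mul])
    _ ≤ (|b| * ε / 4 * |b| + |b| ^ 2 * ε / 4) / (|b| / 2 * |b|) := by gcongr
    _ = ε := by field_simp; ring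

namespace ProbabilityTheory

variable {Ω : Type*} [MeasurableSpace Ω] {μ : Measure Ω} [IsProbabilityMeasure μ]

lemma mgf_le_exp_of_abs_le {W : Ω → ℝ} {b v l : ℝ} (hW : AEMeasurable W μ)
    (hbd : ∀ᵐ ω ∂μ, |W ω| ≤ b) (hmean : μ[W] = 0) (hvar : variance W μ ≤ v)
    (hl : 0 ≤ l) (hlb : l * b < 3) :
    mgf W μ l ≤ Real.exp (l ^ 2 * v / (2 * (1 - l * b / 3))) := by
  set K := l ^ 2 / (2 * (1 - l * b / 3))
  have hK : 0 ≤ K := div_nonneg (sq_nonneg l) (by linarith)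
  have hlW : Integrable (fun ω => l * W ω) μ :=
    (Integrable.of_bound hW.aestronglyMeasurable b hbd).const_mul l
  have hlin : Integrable (fun ω => 1 + l * W ω) μ := (integrable_const 1).add hlW
  have hquad : Integrable (fun ω => K * W ω ^ 2) μ :=
    ((memLp_of_bounded (a := -b) (b := b) (by filter_upwards [hbd] with ω h using abs_le.1 h)
      hW.aestronglyMeasurable 2).integrable_sq).const_mul K
  have hpointwise : ∀ᵐ ω ∂μ, Real.exp (l * W ω) ≤ 1 + l * W ω + K * W ω ^ 2 := by
    filter_upwards [hbd] with ω h
    have habs : |l * W ω| ≤ l * b := by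
      rw [abs_mul, abs_of_nonneg hl]; exact mul_le_mul_of_nonneg_left h hl
    convert Real.exp_le_one_add_add_sq_div habs hlb using 2
    ring
  calc mgf W μ l ≤ ∫ ω, (1 + l * W ω + K * W ω ^ 2) ∂μ :=
        integral_mono_ae
          (integrable_exp_mul_of_le l b hl hW (hbd.mono fun _ h => (le_abs_self _).trans h))
          (hlin.add hquad) hpointwise
    _ = 1 + K * variance W μ := by
        rw [integral_add hlin hquad, integral_add (integrable_const 1) hlW, integral_const_mul,
          integral_const_mul, hmean, variance_of_integral_eq_zero hW hmean]
        simp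
    _ ≤ 1 + K * v := by gcongr
    _ ≤ Real.exp (l ^ 2 * v / (2 * (1 - l * b / 3))) := by
        rw [mul_div_right_comm]; linarith [Real.add_one_le_exp (K * v)]

/-- Bernstein's tail bound for `N` samples of variance `v` and range `b`, at deviation `t` per
sample. -/
noncomputable def bernsteinBound (N : ℕ) (v b t : ℝ) : ℝ :=
  Real.exp (-(N * t ^ 2) / (2 * v + 2 * b * t / 3))

section IID

variable {W : ℕ → Ω → ℝ} {b v t : ℝ}

lemma measureReal_sum_ge_le_bernsteinBound_of_pos (hmeas : ∀ i, Measurable (W i))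
    (hindep : iIndepFun W μ) (hident : ∀ i, IdentDistrib (W i) (W 0) μ μ)
    (hbd : ∀ᵐ ω ∂μ, |W 0 ω| ≤ b) (hmean : μ[W 0] = 0) (hvar : variance (W 0) μ ≤ v)
    (hb : 0 ≤ b) (hv : 0 < v) (ht : 0 ≤ t) (N : ℕ) :
    μ.real {ω | N * t ≤ ∑ i ∈ Finset.range N, W i ω} ≤ bernsteinBound N v b t := by
  set D := v + b * t / 3
  have hD : 0 < D := by positivity
  -- the minimiser of the Chernoff exponent
  set l := t / D
  have hl : 0 ≤ l := div_nonneg ht hD.le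
  have hone : 1 - l * b / 3 = v / D := by simp only [l, D]; field_simp; ring
  have hlb : l * b < 3 := by
    have : 0 < v / D := div_pos hv hD
    linarith
  have hint (i : ℕ) : Integrable (fun ω => Real.exp (l * W i ω)) μ :=
    ((hident i).comp (Real.measurable_exp.comp (measurable_const_mul l))).integrable_iff.2
      (integrable_exp_mul_of_le l b hl (hmeas 0).aemeasurable
        (hbd.mono fun _ h => (le_abs_self _).trans h))
  have hmgf : mgf (∑ i ∈ Finset.range N, W i) μ l = mgf (W 0) μ l ^ N := by
    rw [hindep.mgf_sum hmeas, Finset.prod_congr rfl fun i _ =>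
      mgf_congr_of_identDistrib _ _ (hident i) l, Finset.prod_const, Finset.card_range]
  have hchernoff := measure_ge_le_exp_mul_mgf (N * t) hl
    (hindep.integrable_exp_mul_sum hmeas (s := Finset.range N) fun i _ => hint i)
  simp only [Finset.sum_apply] at hchernoff
  calc μ.real {ω | N * t ≤ ∑ i ∈ Finset.range N, W i ω}
      ≤ Real.exp (-l * (N * t)) * mgf (W 0) μ l ^ N := hmgf ▸ hchernoff
    _ ≤ Real.exp (-l * (N * t)) * Real.exp (l ^ 2 * v / (2 * (1 - l * b / 3))) ^ N := by
        gcongr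
        · exact mgf_nonneg
        · exact mgf_le_exp_of_abs_le (hmeas 0).aemeasurable hbd hmean hvar hl hlb
    _ = bernsteinBound N v b t := by
        rw [bernsteinBound, ← Real.exp_nat_mul, ← Real.exp_add, hone]
        congr 1
        simp only [l, D]
        field_simp
        ring

lemma measureReal_sum_ge_le_bernsteinBound (hmeas : ∀ i, Measurable (W i))
    (hindep : iIndepFun W μ) (hident : ∀ i, IdentDistrib (W i) (W 0) μ μ)
    (hbd : ∀ᵐ ω ∂μ, |W 0 ω| ≤ b) (hmean : μ[W 0] = 0) (hvar : variance (W 0) μ ≤ v)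
    (hb : 0 < b) (ht : 0 < t) (N : ℕ) :
    μ.real {ω | N * t ≤ ∑ i ∈ Finset.range N, W i ω} ≤ bernsteinBound N v b t := by
  -- at `v = 0` the Chernoff parameter would reach `l b = 3`, so let `v' ↓ v` instead
  have hv : 0 ≤ v := (variance_nonneg _ _).trans hvar
  have hcont : ContinuousAt (fun v' => bernsteinBound N v' b t) v := by
    have : 2 * v + 2 * b * t / 3 ≠ 0 := by positivity
    unfold bernsteinBound
    fun_prop (disch := assumption)
  refine ge_of_tendsto (hcont.tendsto.mono_left (nhdsWithin_le_nhds (s := Set.Ioi v))) ?_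
  filter_upwards [self_mem_nhdsWithin] with v' hv'
  exact measureReal_sum_ge_le_bernsteinBound_of_pos hmeas hindep hident hbd hmean
    (hvar.trans (le_of_lt hv')) hb.le (hv.trans_lt hv') ht.le N

lemma measure_abs_sum_ge_le_bernsteinBound (hmeas : ∀ i, Measurable (W i))
    (hindep : iIndepFun W μ) (hident : ∀ i, IdentDistrib (W i) (W 0) μ μ)
    (hbd : ∀ᵐ ω ∂μ, |W 0 ω| ≤ b) (hmean : μ[W 0] = 0) (hvar : variance (W 0) μ ≤ v)
    (hb : 0 < b) (ht : 0 < t) (N : ℕ) :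
    μ {ω | N * t ≤ |∑ i ∈ Finset.range N, W i ω|} ≤
      ENNReal.ofReal (2 * bernsteinBound N v b t) := by
  have hupper := measureReal_sum_ge_le_bernsteinBound hmeas hindep hident hbd hmean hvar hb ht N
  have hlower := measureReal_sum_ge_le_bernsteinBound (W := fun i ω => -W i ω) (v := v)
    (fun i => (hmeas i).neg) (hindep.comp (fun _ x => -x) fun _ => measurable_neg)
    (fun i => (hident i).comp measurable_neg) (by simpa only [abs_neg] using hbd)
    (by simp only [integral_neg, hmean, neg_zero]) (by rwa [variance_fun_neg]) hb ht N
  calc μ {ω | N * t ≤ |∑ i ∈ Finset.range N, W i ω|}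
      ≤ μ ({ω | N * t ≤ ∑ i ∈ Finset.range N, W i ω} ∪
          {ω | N * t ≤ ∑ i ∈ Finset.range N, -W i ω}) := by
        refine measure_mono fun ω hω => ?_
        simp only [Set.mem_ofPred_eq, Set.mem_union, Finset.sum_neg_distrib] at hω ⊢
        exact le_abs.1 hω
    _ ≤ ENNReal.ofReal (bernsteinBound N v b t) + ENNReal.ofReal (bernsteinBound N v b t) := by
        refine (measure_union_le _ _).trans (add_le_add ?_ ?_)
        · rw [← ofReal_measureReal]; exact ENNReal.ofReal_le_ofReal hupper
        · rw [← ofReal_measureReal]; exact ENNReal.ofReal_le_ofReal hlower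
    _ = ENNReal.ofReal (2 * bernsteinBound N v b t) := by
        have hnonneg : 0 ≤ bernsteinBound N v b t := Real.exp_nonneg _
        rw [two_mul, ENNReal.ofReal_add hnonneg hnonneg]

end IID

theorem measure_le_abs_sampleMean_sub_le {V : ℕ → Ω → ℝ} {c m v t : ℝ}
    (hmeas : ∀ i, Measurable (V i)) (hindep : iIndepFun V μ)
    (hident : ∀ i, IdentDistrib (V i) (V 0) μ μ) (hbd : ∀ᵐ ω ∂μ, |V 0 ω| ≤ c)
    (hm : μ[V 0] = m) (hvar : variance (V 0) μ ≤ v) (hc : 0 < c) (ht : 0 < t) (N : ℕ) :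
    μ {ω | t ≤ |(∑ i ∈ Finset.range N, V i ω) / N - m|} ≤
      ENNReal.ofReal (2 * bernsteinBound N v (2 * c) t) := by
  have hmc : |m| ≤ c := by
    simpa [← hm] using norm_integral_le_of_norm_le_const (μ := μ) (f := V 0) hbd
  have hcentered := measure_abs_sum_ge_le_bernsteinBound (W := fun i ω => V i ω - m)
    (b := 2 * c) (v := v) (fun i => (hmeas i).sub_const m)
    (hindep.comp (fun _ x => x - m) fun _ => measurable_sub_const m)
    (fun i => (hident i).comp (measurable_sub_const m))
    (by filter_upwards [hbd] with ω h using (abs_sub _ _).trans (by linarith))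
    (by rw [integral_sub (Integrable.of_bound (hmeas 0).aestronglyMeasurable c hbd)
      (integrable_const m), hm, integral_const]; simp)
    (by rwa [variance_sub_const (hmeas 0).aestronglyMeasurable]) (by linarith) ht N
  refine (measure_mono fun ω (hω : t ≤ _) => ?_).trans hcentered
  show N * t ≤ |∑ i ∈ Finset.range N, (V i ω - m)|
  rcases N.eq_zero_or_pos with rfl | hN
  · simp
  have hN : (0 : ℝ) < N := Nat.cast_pos.2 hN
  rw [Finset.sum_sub_distrib, Finset.sum_const, Finset.card_range, nsmul_eq_mul]
  calc N * t ≤ N * |(∑ i ∈ Finset.range N, V i ω) / N - m| := by gcongr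
    _ = |∑ i ∈ Finset.range N, V i ω - N * m| := by
        rw [← abs_of_pos hN, ← abs_mul, abs_of_pos hN, mul_sub, mul_div_cancel₀ _ hN.ne']

lemma two_mul_bernsteinBound_le {N : ℕ} {v b t δ : ℝ} (hden : 0 < 2 * v + 2 * b * t / 3)
    (ht : t ≠ 0) (hδ : 0 < δ)
    (hN : Real.log (4 / δ) * ((2 * v + 2 * b * t / 3) / t ^ 2) ≤ N) :
    2 * bernsteinBound N v b t ≤ δ / 2 := by
  have hlog : Real.log (4 / δ) ≤ N * t ^ 2 / (2 * v + 2 * b * t / 3) := by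
    rw [le_div_iff₀ hden]
    rwa [mul_div_assoc', div_le_iff₀ (by positivity)] at hN
  calc 2 * bernsteinBound N v b t ≤ 2 * Real.exp (-Real.log (4 / δ)) := by
        rw [bernsteinBound, neg_div]; gcongr
    _ = δ / 2 := by
        rw [Real.exp_neg, Real.exp_log (by positivity), inv_div]; ring

theorem measure_le_abs_sampleMean_sub_le_of_log_le {V : ℕ → Ω → ℝ} {c m v t δ : ℝ}
    (hmeas : ∀ i, Measurable (V i)) (hindep : iIndepFun V μ)
    (hident : ∀ i, IdentDistrib (V i) (V 0) μ μ) (hbd : ∀ᵐ ω ∂μ, |V 0 ω| ≤ c)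
    (hm : μ[V 0] = m) (hvar : variance (V 0) μ ≤ v) (hc : 0 < c) (ht : 0 < t) (hδ : 0 < δ)
    {N : ℕ} (hN : Real.log (4 / δ) * ((2 * v + 2 * (2 * c) * t / 3) / t ^ 2) ≤ N) :
    μ {ω | t ≤ |(∑ i ∈ Finset.range N, V i ω) / N - m|} ≤ ENNReal.ofReal (δ / 2) := by
  have hv : 0 ≤ v := (variance_nonneg _ _).trans hvar
  exact (measure_le_abs_sampleMean_sub_le hmeas hindep hident hbd hm hvar hc ht N).trans
    (ENNReal.ofReal_le_ofReal (two_mul_bernsteinBound_le (by positivity) ht.ne' hδ hN))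

lemma ofReal_one_sub_le_of_measure_compl_le {s : Set Ω} {δ : ℝ} (hδ : 0 ≤ δ)
    (h : μ sᶜ ≤ ENNReal.ofReal δ) : ENNReal.ofReal (1 - δ) ≤ μ s := by
  rw [ENNReal.ofReal_sub 1 hδ, ENNReal.ofReal_one, tsub_le_iff_right]
  calc 1 = μ (s ∪ sᶜ) := by rw [Set.union_compl_self, measure_univ]
    _ ≤ μ s + μ sᶜ := measure_union_le s sᶜ
    _ ≤ μ s + ENNReal.ofReal δ := by gcongr

end ProbabilityTheory

/-- sample complexity of ratio estimation via Bernstein's inequality: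
for i.i.d. bounded pairs `(X_i, Y_i)` with means `μX, μY ≠ 0`, variance bounds
`σX², σY²`, `|μX/μY| ≤ c'`, and `N ≥ 32 ln(4/δ) max{...}`, the ratio of sample means
is `ε`-close to `μX/μY` with probability at least `1 − δ`. -/
theorem stmt_12 {Ω : Type*} [MeasurableSpace Ω] (μ : Measure Ω)
    [IsProbabilityMeasure μ]
    (Z : ℕ → Ω → ℝ × ℝ) (hmeas : ∀ i, Measurable (Z i))
    (hindep : iIndepFun Z μ)
    (hident : ∀ i, IdentDistrib (Z i) (Z 0) μ μ)
    (c c' μX μY σX σY ε δ : ℝ) (hc : 0 < c)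
    (hXbd : ∀ ω, |(Z 0 ω).1| ≤ c) (hYbd : ∀ ω, |(Z 0 ω).2| ≤ c)
    (hμX : ∫ ω, (Z 0 ω).1 ∂μ = μX) (hμY : ∫ ω, (Z 0 ω).2 ∂μ = μY)
    (hμY0 : μY ≠ 0)
    (hσX : variance (fun ω => (Z 0 ω).1) μ ≤ σX ^ 2)
    (hσY : variance (fun ω => (Z 0 ω).2) μ ≤ σY ^ 2)
    (hc' : |μX / μY| ≤ c')
    (hε : 0 < ε) (hε2 : ε ≤ 2 * c') (hδ : 0 < δ)
    (N : ℕ)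
    (hN : 32 * Real.log (4 / δ) *
        max (σX ^ 2 / (μY ^ 2 * ε ^ 2) + c / (6 * |μY| * ε))
            (c' ^ 2 * σY ^ 2 / (μY ^ 2 * ε ^ 2) + c' * c / (6 * |μY| * ε)) ≤ (N : ℝ)) :
    ENNReal.ofReal (1 - δ) ≤
      μ {ω | |((∑ i ∈ Finset.range N, (Z i ω).1) / N) /
              ((∑ i ∈ Finset.range N, (Z i ω).2) / N) - μX / μY| ≤ ε} := by
  obtain hδ1 | hδ1 := le_or_gt 1 δ
  · simp [ENNReal.ofReal_eq_zero.2 (sub_nonpos.2 hδ1)]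
  have hc'0 : 0 < c' := by linarith
  have hμY' : 0 < |μY| := abs_pos.2 hμY0
  have hlog : 0 ≤ 32 * Real.log (4 / δ) :=
    mul_nonneg (by norm_num) (Real.log_nonneg (by rw [le_div_iff₀ hδ]; linarith))
  set t₁ := |μY| * ε / 4
  set t₂ := |μY| * ε / (4 * c')
  have hX : μ {ω | t₁ ≤ |(∑ i ∈ Finset.range N, (Z i ω).1) / N - μX|} ≤
      ENNReal.ofReal (δ / 2) := by
    refine measure_le_abs_sampleMean_sub_le_of_log_le (fun i => (hmeas i).fst)
      (hindep.comp (fun _ => Prod.fst) fun _ => measurable_fst)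
      (fun i => (hident i).comp measurable_fst) (ae_of_all _ hXbd) hμX hσX hc (by positivity) hδ
      (le_trans (le_of_eq ?_) ((mul_le_mul_of_nonneg_left (le_max_left _ _) hlog).trans hN))
    simp only [t₁]; rw [← sq_abs μY]; field_simp; ring
  have hY : μ {ω | t₂ ≤ |(∑ i ∈ Finset.range N, (Z i ω).2) / N - μY|} ≤
      ENNReal.ofReal (δ / 2) := by
    refine measure_le_abs_sampleMean_sub_le_of_log_le (fun i => (hmeas i).snd)
      (hindep.comp (fun _ => Prod.snd) fun _ => measurable_snd)
      (fun i => (hident i).comp measurable_snd) (ae_of_all _ hYbd) hμY hσY hc (by positivity) hδ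
      (le_trans (le_of_eq ?_) ((mul_le_mul_of_nonneg_left (le_max_right _ _) hlog).trans hN))
    simp only [t₂]; rw [← sq_abs μY]; field_simp; ring
  refine ofReal_one_sub_le_of_measure_compl_le hδ.le ?_
  calc μ _ ≤ μ ({ω | t₁ ≤ |(∑ i ∈ Finset.range N, (Z i ω).1) / N - μX|} ∪
        {ω | t₂ ≤ |(∑ i ∈ Finset.range N, (Z i ω).2) / N - μY|}) := by
        refine measure_mono fun ω hω => ?_
        by_contra hgood
        simp only [Set.mem_union, Set.mem_ofPred_eq, not_or, not_le] at hgood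
        exact hω (abs_div_sub_div_le hμY0 hc' hε hε2 hgood.1.le hgood.2.le)
    _ ≤ ENNReal.ofReal (δ / 2) + ENNReal.ofReal (δ / 2) :=
        (measure_union_le _ _).trans (add_le_add hX hY)
    _ = ENNReal.ofReal δ := by
        rw [← ENNReal.ofReal_add (by positivity) (by positivity), add_halves]
end
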